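/- For every n ≥ 2 and every odd positive integer ℓ, the restriction τ_ℓ of the natural homomorphism τ : B_n → S_n (sending σ_i to (i, i+1)) to the congruence subgroup B_n[ℓ] is surjective onto S_n. -/

import Mathlib

open Matrix

/-- The braid relations on `m` generators `σ_1, …, σ_m` (0-indexed by `Fin m`). -/
def braidRels (m : ℕ) : Set (FreeGroup (Fin m)) :=
  {r | (∃ i j : Fin m, (i : ℕ) + 1 = (j : ℕ) ∧
          r = FreeGroup.of i * FreeGroup.of j * FreeGroup.of i *
              (FreeGroup.of j * FreeGroup.of i * FreeGroup.of j)⁻¹) ∨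
       (∃ i j : Fin m, (i : ℕ) + 2 ≤ (j : ℕ) ∧
          r = FreeGroup.of i * FreeGroup.of j * (FreeGroup.of j * FreeGroup.of i)⁻¹)}

/-- The braid group on `n` strands, presented on generators `σ_1, …, σ_{n-1}`. -/
def BraidGroup (n : ℕ) : Type := PresentedGroup (braidRels (n - 1))

instance (n : ℕ) : Group (BraidGroup n) :=
  inferInstanceAs (Group (PresentedGroup (braidRels (n - 1))))

/-- The generator `σ_{k+1}` (in 1-indexed notation) of the braid group. -/
def braidGen (n : ℕ) (k : Fin (n - 1)) : BraidGroup n := PresentedGroup.of k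

/-- The matrix of the generator `σ_{k+1}` under the reduced integral Burau representation. -/
def burauMatrix (n : ℕ) (k : Fin (n - 1)) : Matrix (Fin (n - 1)) (Fin (n - 1)) ℤ :=
  Matrix.of fun a b =>
    if a = b then 1
    else if (a : ℕ) + 1 = (k : ℕ) ∧ b = k then -1
    else if (a : ℕ) = (k : ℕ) + 1 ∧ b = k then 1
    else 0

/-- `ρ` is the reduced integral Burau representation iff it takes the prescribed
values on the generators. -/
def IsBurau (n : ℕ) (ρ : BraidGroup n →* GL (Fin (n - 1)) ℤ) : Prop :=
  ∀ k : Fin (n - 1),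
    (ρ (braidGen n k) : Matrix (Fin (n - 1)) (Fin (n - 1)) ℤ) = burauMatrix n k

/-- The level `ℓ` congruence subgroup `B_n[ℓ]`: the kernel of the composition of the
reduced integral Burau representation with entrywise reduction mod `ℓ`. -/
def congSubgroup (n : ℕ) (ρ : BraidGroup n →* GL (Fin (n - 1)) ℤ) (ℓ : ℕ) :
    Subgroup (BraidGroup n) :=
  ((Matrix.GeneralLinearGroup.map (Int.castRingHom (ZMod ℓ))).comp ρ).ker

instance (n : ℕ) (ρ : BraidGroup n →* GL (Fin (n - 1)) ℤ) (ℓ : ℕ) :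
    (congSubgroup n ρ ℓ).Normal :=
  MonoidHom.normal_ker _

instance (n : ℕ) (ρ : BraidGroup n →* GL (Fin (n - 1)) ℤ) (ℓ : ℕ)
    (K : Subgroup (BraidGroup n)) : ((congSubgroup n ρ ℓ).subgroupOf K).Normal :=
  Subgroup.Normal.subgroupOf (MonoidHom.normal_ker _) K

/-- The transposition `(i, i+1)` (1-indexed), i.e. `(k, k+1)` for `k : Fin (n-1)`
(0-indexed), as a permutation of the `n` strands. -/
def tauSwap (n : ℕ) (k : Fin (n - 1)) : Equiv.Perm (Fin n) :=
  Equiv.swap ⟨(k : ℕ), by have hk := k.isLt; omega⟩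
    ⟨(k : ℕ) + 1, by have hk := k.isLt; omega⟩

/-- `τ` is the natural homomorphism `B_n → S_n` iff it sends each generator `σ_i`
to the transposition `(i, i+1)`. -/
def IsTau (n : ℕ) (τ : BraidGroup n →* Equiv.Perm (Fin n)) : Prop :=
  ∀ k : Fin (n - 1), τ (braidGen n k) = tauSwap n k

/-!
Each generator's Burau matrix is a transvection `1 + N` with `N * N = 0`, so
`ρ (σ_k ^ ℓ) = 1 + ℓ • N ≡ 1 (mod ℓ)` and `σ_k ^ ℓ ∈ B_n[ℓ]`. For odd `ℓ`, `τ (σ_k ^ ℓ)` is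
still the adjacent transposition `(k, k+1)`, and these generate `S_n`.
-/

lemma burauMatrix_sub_one_apply_self_left (n : ℕ) (k b : Fin (n - 1)) :
    (burauMatrix n k - 1) k b = 0 := by
  simp only [burauMatrix, Matrix.sub_apply, Matrix.of_apply, Matrix.one_apply]
  split_ifs <;> simp_all

lemma burauMatrix_sub_one_apply_of_ne (n : ℕ) (k a c : Fin (n - 1)) (hc : c ≠ k) :
    (burauMatrix n k - 1) a c = 0 := by
  simp only [burauMatrix, Matrix.sub_apply, Matrix.of_apply, Matrix.one_apply]
  split_ifs <;> simp_all

-- `burauMatrix n k - 1` is supported on column `k` and vanishes on row `k`.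
lemma burauMatrix_sub_one_mul_self (n : ℕ) (k : Fin (n - 1)) :
    (burauMatrix n k - 1) * (burauMatrix n k - 1) = 0 := by
  ext a b
  rw [Matrix.mul_apply, Matrix.zero_apply]
  refine Finset.sum_eq_zero fun c _ => ?_
  by_cases hc : c = k
  · rw [hc, burauMatrix_sub_one_apply_self_left, mul_zero]
  · rw [burauMatrix_sub_one_apply_of_ne n k a c hc, zero_mul]

lemma one_add_pow_of_mul_self_eq_zero {R : Type*} [Semiring R] {N : R} (h : N * N = 0)
    (t : ℕ) : (1 + N) ^ t = 1 + t • N := by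
  induction t with
  | zero => simp
  | succ t ih =>
    rw [pow_succ, ih]
    simp only [add_mul, mul_add, one_mul, mul_one, smul_mul_assoc, h, smul_zero, add_zero,
      succ_nsmul]
    abel

lemma burauMatrix_pow (n : ℕ) (k : Fin (n - 1)) (t : ℕ) :
    burauMatrix n k ^ t = 1 + t • (burauMatrix n k - 1) := by
  rw [← one_add_pow_of_mul_self_eq_zero (burauMatrix_sub_one_mul_self n k), add_sub_cancel]

lemma braidGen_pow_mem_congSubgroup {n : ℕ} {ρ : BraidGroup n →* GL (Fin (n - 1)) ℤ}
    (hρ : IsBurau n ρ) (ℓ : ℕ) (k : Fin (n - 1)) :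
    braidGen n k ^ ℓ ∈ congSubgroup n ρ ℓ := by
  set f := Int.castRingHom (ZMod ℓ)
  rw [congSubgroup, MonoidHom.mem_ker, MonoidHom.comp_apply, map_pow, map_pow, Units.ext_iff,
    Units.val_pow_eq_pow_val, Units.val_one]
  change f.mapMatrix (ρ (braidGen n k) : Matrix (Fin (n - 1)) (Fin (n - 1)) ℤ) ^ ℓ = 1
  rw [hρ k, ← map_pow, burauMatrix_pow, map_add, map_one, map_nsmul,
    ← Nat.cast_smul_eq_nsmul (ZMod ℓ), ZMod.natCast_self, zero_smul, add_zero]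

lemma tau_braidGen_pow_of_odd {n : ℕ} {τ : BraidGroup n →* Equiv.Perm (Fin n)}
    (hτ : IsTau n τ) {ℓ : ℕ} (hodd : Odd ℓ) (k : Fin (n - 1)) :
    τ (braidGen n k ^ ℓ) = tauSwap n k := by
  have hswap : (tauSwap n k).IsSwap := ⟨_, _, by simp [Fin.ext_iff], rfl⟩
  rw [map_pow, hτ k, ← pow_mod_orderOf, hswap.orderOf, Nat.odd_iff.mp hodd, pow_one]

lemma closure_range_tauSwap (n : ℕ) : Subgroup.closure (Set.range (tauSwap n)) = ⊤ := by
  cases n with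
  | zero => exact Subsingleton.elim _ _
  | succ m =>
    have h : tauSwap (m + 1) = fun i : Fin m => Equiv.swap i.castSucc i.succ := rfl
    exact Subgroup.closure_eq_top_of_mclosure_eq_top
      (h ▸ Equiv.Perm.mclosure_swap_castSucc_succ m)

theorem tau_restrict_surjective_general (n : ℕ) (ℓ : ℕ)
    (hodd : Odd ℓ)
    (ρ : BraidGroup n →* GL (Fin (n - 1)) ℤ) (hρ : IsBurau n ρ)
    (τ : BraidGroup n →* Equiv.Perm (Fin n)) (hτ : IsTau n τ) :
    Function.Surjective (τ.domRestrict (congSubgroup n ρ ℓ)) := by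
  rw [← MonoidHom.range_eq_top, eq_top_iff, ← closure_range_tauSwap, Subgroup.closure_le]
  rintro _ ⟨k, rfl⟩
  exact ⟨⟨_, braidGen_pow_mem_congSubgroup hρ ℓ k⟩, tau_braidGen_pow_of_odd hτ hodd k⟩

/-- For every `n ≥ 2` and every odd positive integer `ℓ`, the restriction of the
natural homomorphism `τ : B_n → S_n` to the congruence subgroup `B_n[ℓ]` is
surjective onto `S_n`. -/
theorem tau_restrict_surjective (n : ℕ) (hn : 2 ≤ n) (ℓ : ℕ) (hℓ : 0 < ℓ)
    (hodd : Odd ℓ)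
    (ρ : BraidGroup n →* GL (Fin (n - 1)) ℤ) (hρ : IsBurau n ρ)
    (τ : BraidGroup n →* Equiv.Perm (Fin n)) (hτ : IsTau n τ) :
    Function.Surjective (τ.domRestrict (congSubgroup n ρ ℓ)) :=
  tau_restrict_surjective_general n ℓ hodd ρ hρ τ hτ
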